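/- arXiv:1406.3738 — 3 statements merged into one kernel-verified Lean document; each statement's English description precedes it below -/
import Mathlib

section
/- Let e : X ⊕ Y → X♯ be defined by e(x,y) = x + δ(y). Then e vanishes on the subgroup ⟨(nδ(y), −ny) : y ∈ Y⟩, descends to V = (X ⊕ Y)/⟨(nδ(y), −ny)⟩, and the induced map e : V → X♯ is surjective. -/
/- Setup: `Y` is a finitely generated free ℤ-module (a free abelian group of
finite rank), `Q : Y → ℤ` a quadratic form with polarization
`B y₁ y₂ = Q (y₁+y₂) - Q y₁ - Q y₂` (given as a bundled bilinear map), `n` a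
positive integer, and `β = B / n` the associated `(1/n)ℤ`-valued form. -/

variable {Y : Type} [AddCommGroup Y]

/-- `Y♯ = {y ∈ Y : β(y, y') ∈ ℤ for all y' ∈ Y}`, where `β = B/n`. -/
def Ysharp (B : Y →+ Y →+ ℤ) (n : ℕ) : AddSubgroup Y where
  carrier := {y | ∀ y' : Y, (n : ℤ) ∣ B y y'}
  zero_mem' := by intro y'; simp
  add_mem' := by
    intro a b ha hb y'
    rw [map_add, AddMonoidHom.add_apply]
    exact dvd_add (ha y') (hb y')
  neg_mem' := by
    intro a ha y'
    rw [map_neg, AddMonoidHom.neg_apply]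
    exact dvd_neg.mpr (ha y')

/-- `X = Hom(Y, ℤ)` viewed inside `Hom(Y, ℚ)`: the integer-valued homomorphisms. -/
def Xgrp (Y : Type) [AddCommGroup Y] : AddSubgroup (Y →+ ℚ) where
  carrier := {f | ∀ y : Y, ∃ k : ℤ, f y = (k : ℚ)}
  zero_mem' := by intro y; exact ⟨0, by simp⟩
  add_mem' := by
    intro f g hf hg y
    obtain ⟨a, ha⟩ := hf y
    obtain ⟨b, hb⟩ := hg y
    exact ⟨a + b, by simp [ha, hb]⟩
  neg_mem' := by
    intro f hf y
    obtain ⟨a, ha⟩ := hf y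
    exact ⟨-a, by simp [ha]⟩

/-- `δ : Y → Hom(Y, ℚ)`, `δ(y) = β(y, ·) = B(y, ·)/n`. -/
def delta (B : Y →+ Y →+ ℤ) (n : ℕ) : Y →+ (Y →+ ℚ) where
  toFun y := ((n : ℚ)⁻¹) • ((Int.castAddHom ℚ).comp (B y))
  map_zero' := by ext y'; simp
  map_add' a b := by
    ext y'
    simp [map_add, smul_eq_mul]
    ring

/-- `X♯ = {x ∈ (1/n)X : ⟨x, y⟩ ∈ ℤ for all y ∈ Y♯}` inside `Hom(Y, ℚ)`. -/
def Xsharp (B : Y →+ Y →+ ℤ) (n : ℕ) : AddSubgroup (Y →+ ℚ) where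
  carrier := {f | (∀ y : Y, ∃ k : ℤ, (n : ℚ) * f y = (k : ℚ)) ∧
      ∀ y ∈ Ysharp B n, ∃ k : ℤ, f y = (k : ℚ)}
  zero_mem' := ⟨fun y => ⟨0, by simp⟩, fun y _ => ⟨0, by simp⟩⟩
  add_mem' := by
    rintro f g ⟨hf1, hf2⟩ ⟨hg1, hg2⟩
    constructor
    · intro y
      obtain ⟨a, ha⟩ := hf1 y
      obtain ⟨b, hb⟩ := hg1 y
      exact ⟨a + b, by push_cast [AddMonoidHom.add_apply, mul_add, ha, hb]; ring⟩
    · intro y hy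
      obtain ⟨a, ha⟩ := hf2 y hy
      obtain ⟨b, hb⟩ := hg2 y hy
      exact ⟨a + b, by simp [ha, hb]⟩
  neg_mem' := by
    rintro f ⟨hf1, hf2⟩
    constructor
    · intro y
      obtain ⟨a, ha⟩ := hf1 y
      exact ⟨-a, by push_cast [AddMonoidHom.neg_apply, mul_neg, ha]; ring⟩
    · intro y hy
      obtain ⟨a, ha⟩ := hf2 y hy
      exact ⟨-a, by simp [ha]⟩

/-- The homomorphism `y ↦ (nδ(y), -ny) = (B(y,·), -ny)`; its range is the
subgroup of relations defining `V = (X ⊕ Y)/⟨(nδ(y), -ny) : y ∈ Y⟩`. -/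
def relHom (B : Y →+ Y →+ ℤ) (n : ℕ) : Y →+ (Y →+ ℤ) × Y :=
  AddMonoidHom.prod B (-(n • AddMonoidHom.id Y))

/-- The subgroup generated by the pairs `(nδ(y), -ny)` for `y ∈ Y`. -/
def Wgrp (B : Y →+ Y →+ ℤ) (n : ℕ) : AddSubgroup ((Y →+ ℤ) × Y) :=
  (relHom B n).range

/-- The inclusion `X = Hom(Y,ℤ) → Hom(Y,ℚ)`. -/
def castComp (Y : Type) [AddCommGroup Y] : (Y →+ ℤ) →+ (Y →+ ℚ) where
  toFun x := (Int.castAddHom ℚ).comp x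
  map_zero' := by ext y; simp
  map_add' a b := by ext y; simp

/-- `e : X ⊕ Y → Hom(Y,ℚ)`, `e(x, y) = x + δ(y)`. -/
def eMap (B : Y →+ Y →+ ℤ) (n : ℕ) : ((Y →+ ℤ) × Y) →+ (Y →+ ℚ) :=
  (castComp Y).comp (AddMonoidHom.fst (Y →+ ℤ) Y) +
    (delta B n).comp (AddMonoidHom.snd (Y →+ ℤ) Y)

/-! Parts one and two are direct computations (the second uses the symmetry of `B`).
For surjectivity, let `f ∈ X♯`; then `g = n f` is integral and `g mod n` vanishes on
`Y♯ = ker (B mod n)`. For a symmetric pairing `ad : Y → Hom(Y, ℤ/n)` on a finitely generated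
`Y`, the range of `ad` is the whole annihilator of `ker ad`: it lies inside by symmetry, and the
annihilator `Hom(Y / ker ad, ℤ/n)` has at most `|Y / ker ad| = |range ad|` elements, because
composing with an injective character `ℤ/n → ℂ` embeds it into the characters of `Y / ker ad`.
So `g ≡ B(y₀, ·) mod n` for some `y₀`, and `f = (g - B(y₀, ·))/n + δ(y₀)`. -/

theorem Nat.card_addMonoidHom_zmod_le (K : Type*) [AddCommGroup K] [Finite K] (n : ℕ)
    [NeZero n] :
    Nat.card (K →+ ZMod n) ≤ Nat.card K := by
  have := Fintype.ofFinite K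
  calc Nat.card (K →+ ZMod n) ≤ Nat.card (AddChar K ℂ) :=
        Nat.card_le_card_of_injective (fun f => ZMod.stdAddChar.compAddMonoidHom f) fun f f' h =>
          AddMonoidHom.ext fun k => ZMod.injective_stdAddChar (DFunLike.congr_fun h k)
    _ ≤ Nat.card K := by
        simpa only [Nat.card_eq_fintype_card] using AddChar.card_addChar_le K ℂ

instance AddMonoidHom.finite_of_moduleFinite {M A : Type*} [AddCommGroup M] [Module.Finite ℤ M]
    [AddCommGroup A] [Finite A] : Finite (M →+ A) := by
  obtain ⟨s, hs⟩ := (Module.Finite.iff_addGroup_fg.mp ‹_›).out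
  exact Finite.of_injective (fun f : M →+ A => fun y : s => f y) fun f g h =>
    AddMonoidHom.eq_of_eqOn_dense hs fun y hy => congr_fun h ⟨y, hy⟩

theorem AddMonoidHom.mem_range_of_ker_le_ker {M : Type*} [AddCommGroup M] [Module.Finite ℤ M]
    {n : ℕ} [NeZero n] (ad : M →+ M →+ ZMod n) (hsymm : ∀ a b, ad a b = ad b a)
    {g : M →+ ZMod n} (hg : ad.ker ≤ g.ker) : g ∈ ad.range := by
  let C := (AddMonoidHom.domRestrictHom ad.ker (ZMod n)).ker
  have hgC : g ∈ C := by
    simpa [C, AddMonoidHom.domRestrict_eq_zero_iff] using fun y hy => hg hy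
  have hle : ad.range ≤ C := by
    rintro _ ⟨a, rfl⟩
    simp only [C, AddMonoidHom.mem_ker, AddMonoidHom.domRestrictHom_apply,
      AddMonoidHom.domRestrict_eq_zero_iff]
    intro y hy
    rw [hsymm, hy, AddMonoidHom.zero_apply]
  have : Finite (M ⧸ ad.ker) :=
    .of_equiv _ (QuotientAddGroup.quotientKerEquivRange ad).symm.toEquiv
  have hcard : Nat.card C ≤ Nat.card ad.range :=
    calc Nat.card C = Nat.card (M ⧸ ad.ker →+ ZMod n) :=
          Nat.card_congr (AddMonoidHom.domRestrictHomKerEquiv (ZMod n) ad.ker)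
      _ ≤ Nat.card (M ⧸ ad.ker) := Nat.card_addMonoidHom_zmod_le _ n
      _ = Nat.card ad.range := Nat.card_congr (QuotientAddGroup.quotientKerEquivRange ad)
  exact AddSubgroup.eq_of_le_of_card_ge hle hcard ▸ hgC

section TorusCover

variable (B : Y →+ Y →+ ℤ) (n : ℕ)

@[simp]
theorem castComp_apply (x : Y →+ ℤ) (y : Y) : castComp Y x y = x y := rfl

theorem Xgrp_le_range_castComp : Xgrp Y ≤ (castComp Y).range := by
  intro f hf
  choose x hx using hf
  refine ⟨{ toFun := x, map_zero' := ?_, map_add' := fun a b => ?_ }, ?_⟩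
  · exact Int.cast_injective (α := ℚ) (by rw [← hx, map_zero, Int.cast_zero])
  · exact Int.cast_injective (α := ℚ) (by rw [Int.cast_add, ← hx, ← hx, ← hx, map_add])
  · ext y
    exact (hx y).symm

theorem eMap_apply (p : (Y →+ ℤ) × Y) (y : Y) :
    eMap B n p y = p.1 y + (n : ℚ)⁻¹ * B p.2 y := by
  simp [eMap, delta, smul_eq_mul]

def pairingMod : Y →+ Y →+ ZMod n :=
  (AddMonoidHom.compHom (Int.castAddHom (ZMod n))).comp B

theorem ker_pairingMod : (pairingMod B n).ker = Ysharp B n := by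
  ext y
  simp [pairingMod, Ysharp, AddMonoidHom.ext_iff, ZMod.intCast_zmod_eq_zero_iff_dvd]

variable {B n}

theorem eMap_relHom (hn : n ≠ 0) (y : Y) : eMap B n (relHom B n y) = 0 := by
  ext y'
  simp [eMap_apply, relHom, hn]

theorem eMap_mem_Xsharp (hB : ∀ a b, B a b = B b a) (hn : n ≠ 0) (p : (Y →+ ℤ) × Y) :
    eMap B n p ∈ Xsharp B n := by
  refine ⟨fun y => ⟨n * p.1 y + B p.2 y, ?_⟩, fun y hy => ?_⟩
  · rw [eMap_apply]
    push_cast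
    field_simp
  · obtain ⟨k, hk⟩ := hy p.2
    refine ⟨p.1 y + k, ?_⟩
    rw [eMap_apply, hB, hk]
    push_cast
    field_simp

theorem exists_eMap_eq [Module.Finite ℤ Y] (hB : ∀ a b, B a b = B b a) (hn : n ≠ 0)
    {f : Y →+ ℚ} (hf : f ∈ Xsharp B n) : ∃ p, eMap B n p = f := by
  have : NeZero n := ⟨hn⟩
  obtain ⟨hf_frac, hf_int⟩ := hf
  obtain ⟨g, hg⟩ : n • f ∈ (castComp Y).range :=
    Xgrp_le_range_castComp fun y => by simpa [nsmul_eq_mul] using hf_frac y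
  have hg_apply (y : Y) : (g y : ℚ) = n * f y := by
    simpa [nsmul_eq_mul] using DFunLike.congr_fun hg y
  have hker : (pairingMod B n).ker ≤ ((Int.castAddHom (ZMod n)).comp g).ker := by
    intro y hy
    rw [ker_pairingMod] at hy
    obtain ⟨k, hk⟩ := hf_int y hy
    have : g y = n * k := by exact_mod_cast hk ▸ hg_apply y
    simp [this]
  obtain ⟨y₀, hy₀⟩ :=
    AddMonoidHom.mem_range_of_ker_le_ker (pairingMod B n) (by simp [pairingMod, hB]) hker
  obtain ⟨c, hc⟩ : (n : ℚ)⁻¹ • castComp Y (g - B y₀) ∈ (castComp Y).range := by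
    refine Xgrp_le_range_castComp fun y => ?_
    obtain ⟨m, hm⟩ := (ZMod.intCast_eq_intCast_iff_dvd_sub (B y₀ y) (g y) n).mp
      (DFunLike.congr_fun hy₀ y)
    refine ⟨m, ?_⟩
    simp only [map_sub, AddMonoidHom.smul_apply, AddMonoidHom.sub_apply, castComp_apply,
      smul_eq_mul]
    field_simp
    exact_mod_cast hm
  refine ⟨(c, y₀), ?_⟩
  ext y
  have hcy := DFunLike.congr_fun hc y
  simp only [castComp_apply] at hcy
  simp only [eMap_apply, hcy, map_sub, AddMonoidHom.smul_apply, AddMonoidHom.sub_apply,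
    castComp_apply, hg_apply, smul_eq_mul]
  field_simp
  ring

end TorusCover

theorem covers_of_tori_stmt6_general [Module.Finite ℤ Y]
    (Q : Y → ℤ) (B : Y →+ Y →+ ℤ)
    (hQB : ∀ y₁ y₂ : Y, B y₁ y₂ = Q (y₁ + y₂) - Q y₁ - Q y₂)
    (n : ℕ) (hn : 0 < n) :
    (∀ p ∈ Wgrp B n, eMap B n p = 0) ∧
    (∀ p : (Y →+ ℤ) × Y, eMap B n p ∈ Xsharp B n) ∧
    (∀ f ∈ Xsharp B n, ∃ p : (Y →+ ℤ) × Y, eMap B n p = f) := by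
  have hB : ∀ a b, B a b = B b a := fun a b => by rw [hQB, hQB, add_comm a b]; ring
  refine ⟨?_, eMap_mem_Xsharp hB hn.ne', fun f hf => exists_eMap_eq hB hn.ne' hf⟩
  rintro _ ⟨y, rfl⟩
  exact eMap_relHom hn.ne' y

/-- `e(x,y) = x + δ(y)` vanishes on the relation subgroup
`⟨(nδ(y), -ny)⟩` (hence descends to `V`), takes values in `X♯`, and the
induced map `e : V → X♯` is surjective. -/
theorem covers_of_tori_stmt6 [Module.Free ℤ Y] [Module.Finite ℤ Y]
    (Q : Y → ℤ) (B : Y →+ Y →+ ℤ)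
    (hQB : ∀ y₁ y₂ : Y, B y₁ y₂ = Q (y₁ + y₂) - Q y₁ - Q y₂)
    (hQ : ∀ (m : ℤ) (y : Y), Q (m • y) = m ^ 2 * Q y)
    (n : ℕ) (hn : 0 < n) :
    (∀ p ∈ Wgrp B n, eMap B n p = 0) ∧
    (∀ p : (Y →+ ℤ) × Y, eMap B n p ∈ Xsharp B n) ∧
    (∀ f ∈ Xsharp B n, ∃ p : (Y →+ ℤ) × Y, eMap B n p = f) :=
  covers_of_tori_stmt6_general Q B hQB n hn
end

section
/- Let G be a finite group, Z = Z(G) its center, and suppose G/Z admits a Lagrangian decomposition: G/Z ≅ L × L* where the commutator pairing c : G/Z × G/Z → ℂˣ restricts trivially to L × L and to L* × L*, and identifies L* with Hom(L, ℂˣ). Let χ : Z → ℂˣ be a character injective on the commutator subgroup [G,G] ⊆ Z, let M be the preimage of L in G (an abelian subgroup), and let χ_M be any extension of χ to M. Then the induced representation Ind_M^G χ_M is irreducible. -/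
open Subgroup
open scoped commutatorElement

/-- The space of the induced representation `Ind_M^G χ_M`: functions
`φ : G → ℂ` with `φ(mg) = χ_M(m)·φ(g)` for `m ∈ M`.  The group `G` acts by
right translation. -/
noncomputable def indSpace (G : Type) [Group G] (M : Subgroup G) (χM : M →* ℂˣ) :
    Submodule ℂ (G → ℂ) where
  carrier := {φ | ∀ (m : M) (g : G), φ ((m : G) * g) = (χM m : ℂ) * φ g}
  zero_mem' := by intro m g; simp
  add_mem' := by
    intro a b ha hb m g
    simp only [Pi.add_apply, ha m g, hb m g]
    ring
  smul_mem' := by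
    intro c a ha m g
    simp only [Pi.smul_apply, smul_eq_mul, ha m g]
    ring


/-! Since `G/Z` is abelian, the subgroup `M ⊇ Z` is normal, and conjugating `χM` by `y` gives
`a ↦ χM (y a y⁻¹) = c(y, a) χM(a)`. If this equals `χM`, then `c(·, y)` is trivial on `L`, so the
`L*`-component of `y` vanishes by nondegeneracy and `y ∈ M`: the inertia group of `χM` is `M`.
Mackey's criterion follows by averaging: for `φ ∈ U` with `φ g ≠ 0`, orthogonality of the
characters of `M` makes `∑ₐ χM(g a g⁻¹)⁻¹ φ(· a)` a nonzero multiple of the function `δ_g`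
supported on `M g`; its right translates are all the `δ_h`, and these span the induced space. -/

section Induced

variable {G : Type} [Group G] {M : Subgroup G} {χM : M →* ℂˣ}

open scoped Classical in
noncomputable def indDelta (M : Subgroup G) (χM : M →* ℂˣ) (g : G) : G → ℂ :=
  fun x => if h : x * g⁻¹ ∈ M then (χM ⟨x * g⁻¹, h⟩ : ℂ) else 0

theorem indDelta_apply_of_mem {g x : G} (h : x * g⁻¹ ∈ M) :
    indDelta M χM g x = χM ⟨x * g⁻¹, h⟩ :=
  dif_pos h

theorem indDelta_apply_of_notMem {g x : G} (h : x * g⁻¹ ∉ M) : indDelta M χM g x = 0 :=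
  dif_neg h

theorem indDelta_mul_right (g k : G) :
    (fun x => indDelta M χM g (x * k)) = indDelta M χM (g * k⁻¹) := by
  funext x
  unfold indDelta
  rw [show x * (g * k⁻¹)⁻¹ = x * k * g⁻¹ by group]

theorem apply_eq_mul_of_mem_indSpace {φ : G → ℂ} (hφ : φ ∈ indSpace G M χM) {g x : G}
    (h : x * g⁻¹ ∈ M) : φ x = χM ⟨x * g⁻¹, h⟩ * φ g := by
  simpa using hφ ⟨x * g⁻¹, h⟩ g

theorem indDelta_mem_indSpace (g : G) : indDelta M χM g ∈ indSpace G M χM := by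
  intro m x
  by_cases h : x * g⁻¹ ∈ M
  · have h' : (m : G) * x * g⁻¹ ∈ M := by rw [mul_assoc]; exact mul_mem m.2 h
    rw [indDelta_apply_of_mem h', indDelta_apply_of_mem h, ← Units.val_mul, ← map_mul]
    congr 3
    simp [mul_assoc]
  · have h' : (m : G) * x * g⁻¹ ∉ M := by rwa [mul_assoc, mul_mem_cancel_left m.2]
    rw [indDelta_apply_of_notMem h', indDelta_apply_of_notMem h, mul_zero]

theorem indSpace_ne_bot : indSpace G M χM ≠ ⊥ := by
  refine (Submodule.ne_bot_iff _).mpr ⟨indDelta M χM 1, indDelta_mem_indSpace 1, fun h => ?_⟩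
  have h1 : indDelta M χM 1 1 = 1 := by
    rw [indDelta_apply_of_mem (by simp)]
    simp only [mul_one, inv_one]
    exact congrArg Units.val (map_one χM)
  simp [h] at h1

theorem sum_smul_indDelta [Fintype G] [Fintype M] {ψ : G → ℂ} (hψ : ψ ∈ indSpace G M χM) :
    ∑ h : G, ψ h • indDelta M χM h = (Fintype.card M : ℂ) • ψ := by
  classical
  funext x
  have hterm : ∀ h, ψ h * indDelta M χM h x = if x * h⁻¹ ∈ M then ψ x else 0 := by
    intro h
    split_ifs with hx
    · rw [indDelta_apply_of_mem hx, apply_eq_mul_of_mem_indSpace hψ hx, mul_comm]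
    · rw [indDelta_apply_of_notMem hx, mul_zero]
  simp only [Finset.sum_apply, Pi.smul_apply, smul_eq_mul, hterm]
  rw [Fintype.sum_equiv ((Equiv.inv G).trans (Equiv.mulLeft x))
    (fun h => if x * h⁻¹ ∈ M then ψ x else 0) (fun k => if k ∈ M then ψ x else 0) fun _ => rfl]
  simp [Finset.sum_ite, Fintype.card_subtype]

theorem apply_mul_of_mem_indSpace [M.Normal] {φ : G → ℂ} (hφ : φ ∈ indSpace G M χM)
    (x : G) (a : M) : φ (x * a) = χM (MulAut.conjNormal x a) * φ x := by
  have h := hφ (MulAut.conjNormal x a) x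
  rwa [MulAut.conjNormal_apply, inv_mul_cancel_right] at h

def inertia [M.Normal] (χM : M →* ℂˣ) : Set G :=
  {y | ∀ a : M, χM (MulAut.conjNormal y a) = χM a}

theorem map_conjNormal_of_mem [M.Normal] {m : G} (hm : m ∈ M) (a : M) :
    χM (MulAut.conjNormal m a) = χM a := by
  have h : MulAut.conjNormal m a = ⟨m, hm⟩ * a * (⟨m, hm⟩ : M)⁻¹ :=
    Subtype.ext (MulAut.conjNormal_apply m a)
  rw [h, map_mul, map_mul, map_inv, mul_comm, inv_mul_cancel_left]

theorem map_conjNormal_eq_iff [M.Normal]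
    (hinert : inertia χM ⊆ M) (x g : G) :
    (∀ a : M, χM (MulAut.conjNormal x a) = χM (MulAut.conjNormal g a)) ↔ x * g⁻¹ ∈ M := by
  refine ⟨fun h => hinert fun a => ?_, fun h a => ?_⟩
  · rw [map_mul, MulAut.mul_apply, h, ← MulAut.mul_apply, ← map_mul, mul_inv_cancel, map_one,
      MulAut.one_apply]
  · rw [show x = x * g⁻¹ * g by group, map_mul, MulAut.mul_apply, map_conjNormal_of_mem h]

theorem sum_map_conjNormal_div [Fintype M] [M.Normal]
    (hinert : inertia χM ⊆ M) (x g : G)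
    [Decidable (x * g⁻¹ ∈ M)] :
    ∑ a : M, (χM (MulAut.conjNormal x a) : ℂ) / χM (MulAut.conjNormal g a) =
      if x * g⁻¹ ∈ M then (Fintype.card M : ℂ) else 0 := by
  classical
  let θ : M →* ℂ := (Units.coeHom ℂ).comp
    (χM.comp (MulAut.conjNormal x).toMonoidHom / χM.comp (MulAut.conjNormal g).toMonoidHom)
  have hθ : θ = 1 ↔ x * g⁻¹ ∈ M := by
    rw [← map_conjNormal_eq_iff hinert, DFunLike.ext_iff]
    simp [θ, div_eq_one_iff_eq, Units.val_inj]
  convert sum_hom_units θ using 1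
  · simp [θ]
  · simp only [hθ, Nat.cast_ite, Nat.cast_zero]

theorem sum_inv_smul_translate [Fintype M] [M.Normal]
    (hinert : inertia χM ⊆ M)
    {φ : G → ℂ} (hφ : φ ∈ indSpace G M χM) (g : G) :
    ∑ a : M, (χM (MulAut.conjNormal g a) : ℂ)⁻¹ • (fun x => φ (x * a)) =
      (Fintype.card M * φ g : ℂ) • indDelta M χM g := by
  classical
  funext x
  simp only [Finset.sum_apply, Pi.smul_apply, smul_eq_mul, apply_mul_of_mem_indSpace hφ]
  calc ∑ a : M, (χM (MulAut.conjNormal g a) : ℂ)⁻¹ * (χM (MulAut.conjNormal x a) * φ x)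
      = (∑ a : M, (χM (MulAut.conjNormal x a) : ℂ) / χM (MulAut.conjNormal g a)) * φ x := by
        rw [Finset.sum_mul]
        exact Finset.sum_congr rfl fun a _ => by ring
    _ = Fintype.card M * φ g * indDelta M χM g x := by
        rw [sum_map_conjNormal_div hinert]
        split_ifs with h
        · rw [indDelta_apply_of_mem h, apply_eq_mul_of_mem_indSpace hφ h]
          ring
        · rw [indDelta_apply_of_notMem h]
          ring

theorem eq_bot_or_eq_indSpace_of_inertia_subset [Finite G] [M.Normal]
    (hinert : inertia χM ⊆ M)
    {U : Submodule ℂ (G → ℂ)} (hU : U ≤ indSpace G M χM)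
    (hinv : ∀ g : G, ∀ φ ∈ U, (fun x => φ (x * g)) ∈ U) : U = ⊥ ∨ U = indSpace G M χM := by
  classical
  have := Fintype.ofFinite G
  have hcard : (Fintype.card M : ℂ) ≠ 0 := Nat.cast_ne_zero.mpr Fintype.card_ne_zero
  refine or_iff_not_imp_left.mpr fun hne => le_antisymm hU fun ψ hψ => ?_
  obtain ⟨φ, hφU, hφ⟩ := (Submodule.ne_bot_iff U).mp hne
  obtain ⟨g, hg⟩ := Function.ne_iff.mp hφ
  have hδg : indDelta M χM g ∈ U := by
    rw [← Submodule.smul_mem_iff U (mul_ne_zero hcard hg), ← sum_inv_smul_translate hinert (hU hφU)]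
    exact U.sum_mem fun a _ => U.smul_mem _ (hinv a φ hφU)
  have hδ (h : G) : indDelta M χM h ∈ U := by
    simpa [indDelta_mul_right] using hinv (h⁻¹ * g) _ hδg
  rw [← Submodule.smul_mem_iff U hcard, ← sum_smul_indDelta hψ]
  exact U.sum_mem fun h _ => U.smul_mem _ (hδ h)

end Induced

theorem commutatorElement_mul_right_of_mem_center {G : Type*} [Group G] {a c : G} (b : G)
    (h : ⁅a, c⁆ ∈ center G) : ⁅a, b * c⁆ = ⁅a, b⁆ * ⁅a, c⁆ := by
  rw [commutatorElement_mul_right_eq_mul_conj, mul_assoc _ b, (mem_center_iff.mp h b),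
    ← mul_assoc, mul_inv_cancel_right]

section CommutatorPairing

variable {G : Type} [Group G] {hGZ : ∀ g h : G, ⁅g, h⁆ ∈ center G}
  {χ : center G →* ℂˣ} {c : G → G → ℂˣ}

theorem pairing_mul_right (hc : ∀ g h : G, c g h = χ ⟨⁅g, h⁆, hGZ g h⟩) (a x y : G) :
    c a (x * y) = c a x * c a y := by
  rw [hc, hc, hc, ← map_mul]
  exact congrArg χ (Subtype.ext (commutatorElement_mul_right_of_mem_center x (hGZ a y)))

theorem pairing_eq_one_of_mem_center (hc : ∀ g h : G, c g h = χ ⟨⁅g, h⁆, hGZ g h⟩) (a z : G)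
    (hz : z ∈ center G) : c a z = 1 := by
  have h : ⁅a, z⁆ = 1 := commutatorElement_eq_one_iff_mul_comm.mpr (mem_center_iff.mp hz a)
  rw [hc, ← map_one χ]
  exact congrArg χ (Subtype.ext h)

theorem pairing_swap (hc : ∀ g h : G, c g h = χ ⟨⁅g, h⁆, hGZ g h⟩) (a y : G) :
    c a y = (c y a)⁻¹ := by
  rw [hc, hc, ← map_inv]
  exact congrArg χ (Subtype.ext (commutatorElement_inv y a).symm)

theorem map_conjNormal_eq_pairing_mul (hc : ∀ g h : G, c g h = χ ⟨⁅g, h⁆, hGZ g h⟩)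
    {M : Subgroup G} [M.Normal] (hZM : center G ≤ M) {χM : M →* ℂˣ}
    (hext : ∀ (z : G) (hz : z ∈ center G) (hzM : z ∈ M), χM ⟨z, hzM⟩ = χ ⟨z, hz⟩)
    (y : G) (a : M) : χM (MulAut.conjNormal y a) = c y a * χM a := by
  have h : MulAut.conjNormal y a = ⟨⁅y, a⁆, hZM (hGZ y a)⟩ * a :=
    Subtype.ext (by simp [commutatorElement_def])
  rw [h, map_mul, hext, hc]

end CommutatorPairing

theorem mk_mem_of_pairing_eq_one {G A : Type*} [Group G] [Monoid A]
    {L Lstar : Subgroup (G ⧸ center G)} (c : G → G → A)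
    (hmul : ∀ a x y : G, c a (x * y) = c a x * c a y)
    (hcent : ∀ a z : G, z ∈ center G → c a z = 1)
    (htrivL : ∀ g h : G, (g : G ⧸ center G) ∈ L → (h : G ⧸ center G) ∈ L → c g h = 1)
    (hprod : ∀ q : G ⧸ center G, ∃ a b : G,
      (a : G ⧸ center G) ∈ L ∧ (b : G ⧸ center G) ∈ Lstar ∧ q = ((a * b : G) : G ⧸ center G))
    (hdualinj : ∀ b b' : G, (b : G ⧸ center G) ∈ Lstar → (b' : G ⧸ center G) ∈ Lstar →
      (∀ a : G, (a : G ⧸ center G) ∈ L → c a b = c a b') →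
      (b : G ⧸ center G) = (b' : G ⧸ center G))
    {y : G} (hy : ∀ a : G, (a : G ⧸ center G) ∈ L → c a y = 1) :
    (y : G ⧸ center G) ∈ L := by
  obtain ⟨a₀, b₀, ha₀, hb₀, hy₀⟩ := hprod y
  have hz : (a₀ * b₀)⁻¹ * y ∈ center G := QuotientGroup.eq.mp hy₀.symm
  have hb₀_one : (b₀ : G ⧸ center G) = ((1 : G) : G ⧸ center G) := by
    refine hdualinj b₀ 1 hb₀ (by simp) fun a ha => ?_
    have := hy a ha
    rwa [← mul_inv_cancel_left (a₀ * b₀) y, hmul, hmul, htrivL a a₀ ha ha₀, hcent a _ hz,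
      one_mul, mul_one, ← hcent a 1 (one_mem _)] at this
  rw [hy₀, QuotientGroup.mk_mul, hb₀_one, QuotientGroup.mk_one, mul_one]
  exact ha₀

theorem covers_of_tori_stmt10_general (G : Type) [Group G] [Finite G]
    (hGZ : ∀ g h : G, ⁅g, h⁆ ∈ Subgroup.center G)
    (χ : Subgroup.center G →* ℂˣ)
    (c : G → G → ℂˣ)
    (hc : ∀ g h : G, c g h = χ ⟨⁅g, h⁆, hGZ g h⟩)
    (L Lstar : Subgroup (G ⧸ Subgroup.center G))
    -- `c` restricts trivially to `L × L` and to `L* × L*`: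
    (htrivL : ∀ g h : G, (g : G ⧸ Subgroup.center G) ∈ L →
      (h : G ⧸ Subgroup.center G) ∈ L → c g h = 1)
    -- `G/Z = L · L*`:
    (hprod : ∀ q : G ⧸ Subgroup.center G, ∃ a b : G,
      (a : G ⧸ Subgroup.center G) ∈ L ∧ (b : G ⧸ Subgroup.center G) ∈ Lstar ∧
        q = ((a * b : G) : G ⧸ Subgroup.center G))
    -- `c` identifies `L*` with `Hom(L, ℂˣ)`:
    (hdualinj : ∀ b b' : G, (b : G ⧸ Subgroup.center G) ∈ Lstar →
      (b' : G ⧸ Subgroup.center G) ∈ Lstar →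
      (∀ a : G, (a : G ⧸ Subgroup.center G) ∈ L → c a b = c a b') →
      (b : G ⧸ Subgroup.center G) = (b' : G ⧸ Subgroup.center G))
    -- `M` is the preimage of `L` in `G`:
    (M : Subgroup G)
    (hM : M = Subgroup.comap (QuotientGroup.mk' (Subgroup.center G)) L)
    -- `χ_M` is an extension of `χ` to `M`:
    (χM : M →* ℂˣ)
    (hext : ∀ (z : G) (hz : z ∈ Subgroup.center G) (hzM : z ∈ M),
      χM ⟨z, hzM⟩ = χ ⟨z, hz⟩) :
    indSpace G M χM ≠ ⊥ ∧
    ∀ U : Submodule ℂ (G → ℂ), U ≤ indSpace G M χM →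
      (∀ g : G, ∀ φ ∈ U, (fun x => φ (x * g)) ∈ U) →
      U = ⊥ ∨ U = indSpace G M χM := by
  have hmemM (x : G) : x ∈ M ↔ (x : G ⧸ center G) ∈ L := by rw [hM]; rfl
  have hZM : center G ≤ M := fun z hz =>
    (hmemM z).mpr ((QuotientGroup.eq_one_iff z).mpr hz ▸ L.one_mem)
  have : M.Normal :=
    commutator_top_left_le_iff.mp (commutator_le.mpr fun g _ m _ => hZM (hGZ g m))
  refine ⟨indSpace_ne_bot, fun U hU hinv => eq_bot_or_eq_indSpace_of_inertia_subset ?_ hU hinv⟩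
  intro y hy
  refine (hmemM y).mpr (mk_mem_of_pairing_eq_one c (pairing_mul_right hc)
    (pairing_eq_one_of_mem_center hc) htrivL hprod hdualinj fun a ha => ?_)
  have hya := hy ⟨a, (hmemM a).mpr ha⟩
  rw [map_conjNormal_eq_pairing_mul hc hZM hext, mul_eq_right] at hya
  rw [pairing_swap hc, hya, inv_one]

/-- finite-group Stone–von Neumann: let `G` be a finite group
whose commutators are central, `Z = Z(G)`, with a Lagrangian decomposition
`G/Z = L × L*` for the commutator pairing `c(g,h) = χ([g,h])`, where
`χ : Z → ℂˣ` is injective on `[G,G] ⊆ Z`.  Let `M` be the preimage of `L`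
in `G` and `χ_M` any extension of `χ` to `M`.  Then the induced representation
`Ind_M^G χ_M` (realized on `indSpace G M χM` with the right-translation
action) is irreducible. -/
theorem covers_of_tori_stmt10 (G : Type) [Group G] [Finite G]
    (hGZ : ∀ g h : G, ⁅g, h⁆ ∈ Subgroup.center G)
    (χ : Subgroup.center G →* ℂˣ)
    (hχinj : ∀ z : Subgroup.center G,
      (z : G) ∈ commutator G → χ z = 1 → (z : G) = 1)
    (c : G → G → ℂˣ)
    (hc : ∀ g h : G, c g h = χ ⟨⁅g, h⁆, hGZ g h⟩)
    (L Lstar : Subgroup (G ⧸ Subgroup.center G))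
    -- `c` restricts trivially to `L × L` and to `L* × L*`:
    (htrivL : ∀ g h : G, (g : G ⧸ Subgroup.center G) ∈ L →
      (h : G ⧸ Subgroup.center G) ∈ L → c g h = 1)
    (htrivLs : ∀ g h : G, (g : G ⧸ Subgroup.center G) ∈ Lstar →
      (h : G ⧸ Subgroup.center G) ∈ Lstar → c g h = 1)
    -- `G/Z = L · L*`:
    (hprod : ∀ q : G ⧸ Subgroup.center G, ∃ a b : G,
      (a : G ⧸ Subgroup.center G) ∈ L ∧ (b : G ⧸ Subgroup.center G) ∈ Lstar ∧
        q = ((a * b : G) : G ⧸ Subgroup.center G))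
    -- `c` identifies `L*` with `Hom(L, ℂˣ)`:
    (hdualinj : ∀ b b' : G, (b : G ⧸ Subgroup.center G) ∈ Lstar →
      (b' : G ⧸ Subgroup.center G) ∈ Lstar →
      (∀ a : G, (a : G ⧸ Subgroup.center G) ∈ L → c a b = c a b') →
      (b : G ⧸ Subgroup.center G) = (b' : G ⧸ Subgroup.center G))
    (hdualsurj : ∀ φ : L →* ℂˣ, ∃ b : G,
      (b : G ⧸ Subgroup.center G) ∈ Lstar ∧
      ∀ (a : G) (ha : (a : G ⧸ Subgroup.center G) ∈ L),
        c a b = φ ⟨(a : G ⧸ Subgroup.center G), ha⟩)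
    -- `M` is the preimage of `L` in `G`:
    (M : Subgroup G)
    (hM : M = Subgroup.comap (QuotientGroup.mk' (Subgroup.center G)) L)
    -- `χ_M` is an extension of `χ` to `M`:
    (χM : M →* ℂˣ)
    (hext : ∀ (z : G) (hz : z ∈ Subgroup.center G) (hzM : z ∈ M),
      χM ⟨z, hzM⟩ = χ ⟨z, hz⟩) :
    indSpace G M χM ≠ ⊥ ∧
    ∀ U : Submodule ℂ (G → ℂ), U ≤ indSpace G M χM →
      (∀ g : G, ∀ φ ∈ U, (fun x => φ (x * g)) ∈ U) →
      U = ⊥ ∨ U = indSpace G M χM :=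
  covers_of_tori_stmt10_general G hGZ χ c hc L Lstar htrivL hprod hdualinj M hM χM hext
end

section
/- In the setting of the previous statement, any two irreducible representations of the finite group G with the same central character χ (injective on [G,G]) are isomorphic, and such a representation has dimension √[G:Z]. -/
/-!
If `g` is not central, some commutator `⁅h, g⁆` is a central element with `χ ⁅h, g⁆ ≠ 1`; since
`h * g * h⁻¹ = ⁅h, g⁆ * g`, the character of a representation with central character `χ` vanishes
off `Z`. The character inner product of two such representations `V`, `W` is therefore
`|Z| · dim V · dim W / |G|`, and it equals the dimension of the space of intertwiners `V → W`.
This is nonzero, so by Schur's lemma some intertwiner is an isomorphism; for `W = V` it is `1`,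
so `|Z| · (dim V)² = |G|`.
-/

open Module
open scoped MonoidAlgebra commutatorElement

namespace Representation

variable {k G V W : Type*} [Field k] [Group G] [AddCommGroup V] [Module k V]
  [AddCommGroup W] [Module k W]

theorem isIrreducible_of_forall_invariant [Nontrivial V] (ρ : Representation k G V)
    (h : ∀ U : Submodule k V, (∀ g, ∀ v ∈ U, ρ g v ∈ U) → U = ⊥ ∨ U = ⊤) :
    IsIrreducible ρ where
  exists_pair_ne := ⟨⊥, ⊤, fun hbt => bot_ne_top (congrArg Subrepresentation.toSubmodule hbt)⟩
  eq_bot_or_eq_top U := by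
    refine (h U.toSubmodule fun g v hv => U.apply_mem_toSubmodule g hv).imp ?_ ?_ <;>
      exact fun hU => Subrepresentation.toSubmodule_injective hU

theorem finiteDimensional_of_isIrreducible [Finite G] (ρ : Representation k G V)
    [IsIrreducible ρ] : FiniteDimensional k V := by
  have : Module.Finite k ρ.asModule := .trans k[G] ρ.asModule
  exact .equiv ρ.asModuleEquiv

theorem character_eq_zero_of_commutator_eq_smul (ρ : Representation k G V) {g h : G} {c : k}
    (hc : c ≠ 1) (hρ : ρ ⁅h, g⁆ = c • 1) : ρ.character g = 0 := by
  have hconj : ρ.character g = c * ρ.character g := by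
    calc ρ.character g = ρ.character (h * g * h⁻¹) := (char_conj ρ g h).symm
      _ = c * ρ.character g := by
        rw [show h * g * h⁻¹ = ⁅h, g⁆ * g by group, character, map_mul, hρ, smul_mul_assoc,
          one_mul, map_smul, smul_eq_mul, character]
  by_contra hne
  exact hc (mul_eq_right₀ hne |>.mp hconj.symm)

def HasCentralCharacter (ρ : Representation k G V) (χ : Subgroup.center G →* kˣ) : Prop :=
  ∀ z : Subgroup.center G, ρ z = (χ z : k) • 1

variable {ρ : Representation k G V} {σ : Representation k G W} {χ : Subgroup.center G →* kˣ}

theorem HasCentralCharacter.character_apply [FiniteDimensional k V] (hρ : HasCentralCharacter ρ χ)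
    (z : Subgroup.center G) : ρ.character z = χ z * finrank k V := by
  rw [character, hρ z, map_smul, Module.End.one_eq_id, LinearMap.trace_id, smul_eq_mul]

theorem HasCentralCharacter.character_eq_zero (hρ : HasCentralCharacter ρ χ)
    (hGZ : ∀ g h : G, ⁅g, h⁆ ∈ Subgroup.center G)
    (hχ : ∀ z : Subgroup.center G, (z : G) ∈ commutator G → χ z = 1 → (z : G) = 1)
    {g : G} (hg : g ∉ Subgroup.center G) : ρ.character g = 0 := by
  obtain ⟨h, hgh⟩ : ∃ h, h * g ≠ g * h := by
    simpa [Subgroup.mem_center_iff, eq_comm] using hg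
  have hne : ⁅h, g⁆ ≠ 1 := fun h1 => hgh (commutatorElement_eq_one_iff_mul_comm.mp h1)
  refine character_eq_zero_of_commutator_eq_smul ρ (c := χ ⟨_, hGZ h g⟩) ?_ (hρ ⟨_, hGZ h g⟩)
  intro h1
  refine hne (hχ _ ?_ (Units.ext h1))
  rw [commutator_def]
  exact Subgroup.commutator_mem_commutator (Subgroup.mem_top h) (Subgroup.mem_top g)

theorem HasCentralCharacter.sum_character_mul_character_inv [Fintype G]
    [FiniteDimensional k V] [FiniteDimensional k W]
    (hρ : HasCentralCharacter ρ χ) (hσ : HasCentralCharacter σ χ)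
    (hGZ : ∀ g h : G, ⁅g, h⁆ ∈ Subgroup.center G)
    (hχ : ∀ z : Subgroup.center G, (z : G) ∈ commutator G → χ z = 1 → (z : G) = 1) :
    ∑ g : G, σ.character g * ρ.character g⁻¹ =
      Nat.card (Subgroup.center G) * (finrank k V * finrank k W) := by
  classical
  have hterm (g : G) : σ.character g * ρ.character g⁻¹ =
      if g ∈ Subgroup.center G then (finrank k V * finrank k W : k) else 0 := by
    split_ifs with hg
    · lift g to Subgroup.center G using hg
      rw [← Subgroup.coe_inv, hσ.character_apply, hρ.character_apply, map_inv,
        Units.val_inv_eq_inv_val]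
      field_simp
    · rw [hσ.character_eq_zero hGZ hχ hg, zero_mul]
  rw [Finset.sum_congr rfl fun g _ => hterm g, ← Finset.sum_filter, Finset.sum_const,
    nsmul_eq_mul, Nat.card_eq_fintype_card, Fintype.card_subtype]

theorem HasCentralCharacter.card_mul_finrank_intertwiningMap [CharZero k] [Finite G]
    [FiniteDimensional k V] [FiniteDimensional k W]
    (hρ : HasCentralCharacter ρ χ) (hσ : HasCentralCharacter σ χ)
    (hGZ : ∀ g h : G, ⁅g, h⁆ ∈ Subgroup.center G)
    (hχ : ∀ z : Subgroup.center G, (z : G) ∈ commutator G → χ z = 1 → (z : G) = 1) :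
    Nat.card G * finrank k (IntertwiningMap ρ σ) =
      Nat.card (Subgroup.center G) * (finrank k V * finrank k W) := by
  have := Fintype.ofFinite G
  have hG : (Nat.card G : k) ≠ 0 := Nat.cast_ne_zero.mpr Nat.card_pos.ne'
  have := invertibleOfNonzero hG
  have h := card_inv_mul_sum_char_mul_char_eq_finrank ρ σ
  rw [hρ.sum_character_mul_character_inv hσ hGZ hχ] at h
  exact_mod_cast (inv_mul_eq_iff_eq_mul₀ hG).mp h |>.symm

theorem IsIrreducible.nonempty_equiv_of_finrank_intertwiningMap_ne_zero [IsIrreducible ρ]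
    [IsIrreducible σ] (h : finrank k (IntertwiningMap ρ σ) ≠ 0) : Nonempty (Equiv ρ σ) := by
  by_contra hempty
  have := not_nonempty_iff.mp hempty
  exact h finrank_zero_of_subsingleton

end Representation

open Representation

/-- let `G` be a finite group with `[G,G] ⊆ Z = Z(G)` and
`χ : Z → ℂˣ` a character injective on `[G,G]`.  Any two irreducible
representations of `G` with central character `χ` are isomorphic (via an
intertwining linear isomorphism), and such a representation has dimension
`√[G:Z]`, i.e. `(dim)² = [G:Z]`. -/
theorem covers_of_tori_stmt11 (G : Type) [Group G] [Finite G]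
    (hGZ : ∀ g h : G, ⁅g, h⁆ ∈ Subgroup.center G)
    (χ : Subgroup.center G →* ℂˣ)
    (hχinj : ∀ z : Subgroup.center G,
      (z : G) ∈ commutator G → χ z = 1 → (z : G) = 1)
    (V W : Type) [AddCommGroup V] [Module ℂ V] [AddCommGroup W] [Module ℂ W]
    [Nontrivial V] [Nontrivial W]
    (ρV : Representation ℂ G V) (ρW : Representation ℂ G W)
    -- irreducibility:
    (hVirr : ∀ U : Submodule ℂ V, (∀ g : G, ∀ v ∈ U, ρV g v ∈ U) →
      U = ⊥ ∨ U = ⊤)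
    (hWirr : ∀ U : Submodule ℂ W, (∀ g : G, ∀ w ∈ U, ρW g w ∈ U) →
      U = ⊥ ∨ U = ⊤)
    -- both have central character `χ`:
    (hVχ : ∀ (z : Subgroup.center G) (v : V), ρV (z : G) v = (χ z : ℂ) • v)
    (hWχ : ∀ (z : Subgroup.center G) (w : W), ρW (z : G) w = (χ z : ℂ) • w) :
    (∃ e : V ≃ₗ[ℂ] W, ∀ (g : G) (v : V), e (ρV g v) = ρW g (e v)) ∧
    finrank ℂ V * finrank ℂ V = (Subgroup.center G).index := by
  have hV : ρV.HasCentralCharacter χ := fun z => LinearMap.ext (hVχ z)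
  have hW : ρW.HasCentralCharacter χ := fun z => LinearMap.ext (hWχ z)
  have := isIrreducible_of_forall_invariant ρV hVirr
  have := isIrreducible_of_forall_invariant ρW hWirr
  have := finiteDimensional_of_isIrreducible ρV
  have := finiteDimensional_of_isIrreducible ρW
  constructor
  · have hcount := hV.card_mul_finrank_intertwiningMap hW hGZ hχinj
    have hne : finrank ℂ (IntertwiningMap ρV ρW) ≠ 0 := by
      intro h0
      rw [h0, mul_zero] at hcount
      exact (Nat.mul_pos Nat.card_pos (Nat.mul_pos finrank_pos finrank_pos)).ne hcount
    obtain ⟨φ⟩ := IsIrreducible.nonempty_equiv_of_finrank_intertwiningMap_ne_zero hne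
    exact ⟨φ.toLinearEquiv, φ.isIntertwining⟩
  · have hcount := hV.card_mul_finrank_intertwiningMap hV hGZ hχinj
    rw [IsIrreducible.finrank_intertwiningMap_self, mul_one,
      ← (Subgroup.center G).card_mul_index] at hcount
    exact (Nat.eq_of_mul_eq_mul_left Nat.card_pos hcount).symm
end
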